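/- arXiv:0905.1368 — 5 statements merged into one kernel-verified Lean document; each statement's English description precedes it below -/
import Mathlib

section
/- Let (X,d) be a metric space, X₁,…,Xₙ topological spaces, π : X₁ ∪ … ∪ Xₙ → X a continuous map, and f : X₁ ∪ … ∪ Xₙ → ℝ a nonnegative continuous function. Fix x ∈ Xᵢ and ρ > 0, and suppose π⁻¹(B(π(x),2ρ)) ∩ Xⱼ is complete for each j. Then there exist x' in the disjoint union and 0 < ρ' ≤ ρ such that d(π(x'),π(x)) < 2ρ, sup over π⁻¹(B(π(x'),ρ')) of f is ≤ 2 f(x'), and ρ' · f(x') ≥ ρ · f(x). -/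
open Filter Metric Topology

/-!
If no such point exists, then for every `z` and `r ≤ ρ` with `π z ∈ B(π x, 2ρ)` and
`ρ f x ≤ r f z` there is `y` with `d(π y, π z) < r` and `f y > 2 f z`. Iterating from `x` with radii
`ρ / 2 ^ k` keeps these conditions and gives a sequence whose images under `π` are Cauchy in
`B(π x, 2ρ)` while `f` more than doubles at each step. Completeness of the component visited
infinitely often yields a convergent subsequence, on which the continuous `f` cannot blow up.
-/

theorem exists_seq_of_forall_exists_succ {Z : Type*} {P : ℕ → Z → Prop} {R : ℕ → Z → Z → Prop}
    {z₀ : Z} (h₀ : P 0 z₀) (step : ∀ k z, P k z → ∃ y, P (k + 1) y ∧ R k z y) :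
    ∃ F : ℕ → Z, ∀ k, P k (F k) ∧ R k (F k) (F (k + 1)) := by
  choose! g hg using step
  let F : ℕ → Z := fun k => Nat.rec z₀ g k
  have hP : ∀ k, P k (F k) := by
    intro k
    induction k with
    | zero => exact h₀
    | succ k ih => exact (hg k _ ih).1
  exact ⟨F, fun k => ⟨hP k, (hg k _ (hP k)).2⟩⟩

theorem Sigma.exists_subseq_eq_mk {ι : Type*} [Finite ι] {Y : ι → Type*} (z : ℕ → Σ i, Y i) :
    ∃ (i : ι) (φ : ℕ → ℕ) (u : ℕ → Y i), StrictMono φ ∧ ∀ k, z (φ k) = ⟨i, u k⟩ := by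
  have : ∃ᶠ k in atTop, ∃ i, ∃ y : Y i, z k = ⟨i, y⟩ :=
    Frequently.of_forall fun k => ⟨(z k).1, (z k).2, rfl⟩
  obtain ⟨i, hi⟩ := frequently_exists.1 this
  obtain ⟨φ, hφ, hzφ⟩ := extraction_of_frequently_atTop hi
  choose u hu using hzφ
  exact ⟨i, φ, u, hφ, hu⟩

theorem Sigma.exists_subseq_tendsto_of_cauchySeq {ι X : Type*} [Finite ι] [PseudoMetricSpace X]
    {Y : ι → Type*} [∀ i, TopologicalSpace (Y i)] (π : (Σ i, Y i) → X) (s : Set X)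
    (h : ∀ (i : ι) (u : ℕ → Y i), (∀ k, π ⟨i, u k⟩ ∈ s) → CauchySeq (fun k => π ⟨i, u k⟩) →
      ∃ (φ : ℕ → ℕ) (y : Y i), StrictMono φ ∧ Tendsto (fun k => u (φ k)) atTop (𝓝 y))
    (z : ℕ → Σ i, Y i) (hzs : ∀ k, π (z k) ∈ s) (hz : CauchySeq (π ∘ z)) :
    ∃ (φ : ℕ → ℕ) (y : Σ i, Y i), StrictMono φ ∧ Tendsto (z ∘ φ) atTop (𝓝 y) := by
  obtain ⟨i, φ, u, hφ, hu⟩ := Sigma.exists_subseq_eq_mk z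
  have hus : ∀ k, π ⟨i, u k⟩ ∈ s := fun k => hu k ▸ hzs (φ k)
  have hcau : CauchySeq fun k => π ⟨i, u k⟩ := by
    simpa only [Function.comp_def, hu] using hz.comp_tendsto hφ.tendsto_atTop
  obtain ⟨ψ, y, hψ, hy⟩ := h i u hus hcau
  refine ⟨φ ∘ ψ, ⟨i, y⟩, hφ.comp hψ, ?_⟩
  simpa only [Function.comp_def, hu] using (continuous_sigmaMk.tendsto y).comp hy

section Hofer

variable {Z X : Type*} [PseudoMetricSpace X] {π : Z → X} {f : Z → ℝ} {x : Z} {ρ : ℝ}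

theorem exists_seq_of_forall_exists_doubling (hρ : 0 < ρ)
    (step : ∀ z r, 0 < r → r ≤ ρ → dist (π z) (π x) < 2 * ρ → ρ * f x ≤ r * f z →
      ∃ y, dist (π y) (π z) < r ∧ 2 * f z < f y) :
    ∃ F : ℕ → Z, ∀ k, dist (π (F k)) (π x) < 2 * ρ ∧
      dist (π (F k)) (π (F (k + 1))) ≤ 2 * ρ / 2 / 2 ^ k ∧ 2 * f (F k) < f (F (k + 1)) := by
  obtain ⟨F, hF⟩ := exists_seq_of_forall_exists_succ (z₀ := x)
    (P := fun k z => dist (π z) (π x) ≤ 2 * ρ - 2 * (ρ / 2 ^ k) ∧ ρ * f x ≤ ρ / 2 ^ k * f z)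
    (R := fun k z y => dist (π y) (π z) < ρ / 2 ^ k ∧ 2 * f z < f y)
    (by simp) (by
      rintro k z ⟨hzx, hfz⟩
      have hr : 0 < ρ / 2 ^ k := by positivity
      have hrρ : ρ / 2 ^ k ≤ ρ := div_le_self hρ.le (one_le_pow₀ one_le_two)
      obtain ⟨y, hyz, hfy⟩ := step z _ hr hrρ (by linarith) hfz
      have hhalf : ρ / 2 ^ (k + 1) = ρ / 2 ^ k / 2 := by rw [pow_succ, div_div]
      refine ⟨y, ⟨?_, ?_⟩, hyz, hfy⟩
      · calc dist (π y) (π x) ≤ dist (π y) (π z) + dist (π z) (π x) := dist_triangle _ _ _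
          _ ≤ 2 * ρ - 2 * (ρ / 2 ^ (k + 1)) := by rw [hhalf]; linarith
      · calc ρ * f x ≤ ρ / 2 ^ k * f z := hfz
          _ = ρ / 2 ^ (k + 1) * (2 * f z) := by rw [hhalf]; ring
          _ ≤ ρ / 2 ^ (k + 1) * f y := by gcongr)
  refine ⟨F, fun k => ⟨?_, ?_, (hF k).2.2⟩⟩
  · have : 0 < ρ / 2 ^ k := by positivity
    linarith [(hF k).1.1]
  · rw [dist_comm, mul_div_cancel_left₀ _ two_ne_zero]
    exact (hF k).2.1.le

variable [TopologicalSpace Z]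

theorem exists_hofer_point (hf : Continuous f) (hf0 : ∀ z, 0 ≤ f z) (hρ : 0 < ρ)
    (hcomplete : ∀ u : ℕ → Z, (∀ k, π (u k) ∈ ball (π x) (2 * ρ)) → CauchySeq (π ∘ u) →
      ∃ (φ : ℕ → ℕ) (y : Z), StrictMono φ ∧ Tendsto (u ∘ φ) atTop (𝓝 y)) :
    ∃ (x' : Z) (ρ' : ℝ), 0 < ρ' ∧ ρ' ≤ ρ ∧ dist (π x') (π x) < 2 * ρ ∧
      (∀ y, π y ∈ ball (π x') ρ' → f y ≤ 2 * f x') ∧ ρ * f x ≤ ρ' * f x' := by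
  by_contra! hcon
  have step : ∀ z r, 0 < r → r ≤ ρ → dist (π z) (π x) < 2 * ρ → ρ * f x ≤ r * f z →
      ∃ y, dist (π y) (π z) < r ∧ 2 * f z < f y := by
    intro z r hr hrρ hz hfz
    by_contra! hy
    exact (hcon z r hr hrρ hz fun y hyz => hy y (mem_ball.1 hyz)).not_ge hfz
  obtain ⟨F, hF⟩ := exists_seq_of_forall_exists_doubling hρ step
  have hcau : CauchySeq (π ∘ F) := cauchySeq_of_le_geometric_two fun k => (hF k).2.1
  have htop : Tendsto (f ∘ F) atTop atTop := by
    have hpos : 0 < f (F 1) := by linarith [(hF 0).2.2, hf0 (F 0)]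
    refine (tendsto_add_atTop_iff_nat 1).1 (tendsto_atTop_of_geom_le hpos one_lt_two ?_)
    exact fun k => (hF (k + 1)).2.2.le
  obtain ⟨φ, y, hφ, hy⟩ := hcomplete F (fun k => mem_ball.2 (hF k).1) hcau
  exact not_tendsto_nhds_of_tendsto_atTop (htop.comp hφ.tendsto_atTop) _
    ((hf.tendsto y).comp hy)

end Hofer

theorem stmt_0_general {X : Type*} [MetricSpace X] {n : ℕ} (Y : Fin n → Type*)
    [∀ i, TopologicalSpace (Y i)]
    (π : (Σ i, Y i) → X)
    (f : (Σ i, Y i) → ℝ) (hf : Continuous f) (hf0 : ∀ y, 0 ≤ f y)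
    (x : Σ i, Y i) (ρ : ℝ) (hρ : 0 < ρ)
    (hcomplete : ∀ (i : Fin n) (u : ℕ → Y i),
      (∀ k, π ⟨i, u k⟩ ∈ Metric.ball (π x) (2 * ρ)) →
      CauchySeq (fun k => π ⟨i, u k⟩) →
      ∃ (φ : ℕ → ℕ) (y : Y i), StrictMono φ ∧
        Filter.Tendsto (fun k => u (φ k)) Filter.atTop (nhds y)) :
    ∃ (x' : Σ i, Y i) (ρ' : ℝ), 0 < ρ' ∧ ρ' ≤ ρ ∧
      dist (π x') (π x) < 2 * ρ ∧
      (∀ y : Σ i, Y i, π y ∈ Metric.ball (π x') ρ' → f y ≤ 2 * f x') ∧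
      ρ * f x ≤ ρ' * f x' :=
  exists_hofer_point hf hf0 hρ (Sigma.exists_subseq_tendsto_of_cauchySeq π _ hcomplete)

/-- Hofer's lemma for a disjoint union of topological spaces mapping to a metric space. -/
theorem stmt_0 {X : Type*} [MetricSpace X] {n : ℕ} (Y : Fin n → Type*)
    [∀ i, TopologicalSpace (Y i)]
    (π : (Σ i, Y i) → X) (hπ : Continuous π)
    (f : (Σ i, Y i) → ℝ) (hf : Continuous f) (hf0 : ∀ y, 0 ≤ f y)
    (x : Σ i, Y i) (ρ : ℝ) (hρ : 0 < ρ)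
    (hcomplete : ∀ (i : Fin n) (u : ℕ → Y i),
      (∀ k, π ⟨i, u k⟩ ∈ Metric.ball (π x) (2 * ρ)) →
      CauchySeq (fun k => π ⟨i, u k⟩) →
      ∃ (φ : ℕ → ℕ) (y : Y i), StrictMono φ ∧
        Filter.Tendsto (fun k => u (φ k)) Filter.atTop (nhds y)) :
    ∃ (x' : Σ i, Y i) (ρ' : ℝ), 0 < ρ' ∧ ρ' ≤ ρ ∧
      dist (π x') (π x) < 2 * ρ ∧
      (∀ y : Σ i, Y i, π y ∈ Metric.ball (π x') ρ' → f y ≤ 2 * f x') ∧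
      ρ * f x ≤ ρ' * f x' :=
  stmt_0_general Y π f hf hf0 x ρ hρ hcomplete
end

section
/- Let f : [1,∞) → [0,∞) be a C² function satisfying f''(s) ≥ Δ² f(s) for all s ≥ 1, for some Δ > 0, and assume ∫₁^∞ f(s) ds < ∞. Then there exists a constant C depending only on Δ such that f(s) ≤ C e^{−Δ s} ∫₁² f(t) dt for all s ≥ 2. -/
/-!
Since `f'' ≥ Δ² f ≥ 0`, `f` is convex; being nonnegative and integrable it cannot increase, so
`f' ≤ 0` and `f ≤ f 1`. The function `e^{-Δ s} (f' + Δ f)` has derivative `e^{-Δ s} (f'' - Δ² f) ≥ 0`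
and is bounded by `Δ f 1 e^{-Δ s} → 0`, so `f' + Δ f ≤ 0`. This is the derivative of `e^{Δ s} f`
up to the factor `e^{Δ s}`, hence `e^{Δ s} f(s) ≤ e^{Δ t} f(t) ≤ e^{2Δ} f(t)` for `1 ≤ t ≤ 2 ≤ s`,
and averaging over `t ∈ [1, 2]` gives the bound with `C = e^{2Δ}`.
-/

open MeasureTheory Set Filter Topology Real

lemma monotoneOn_Ici_of_hasDerivAt_nonneg {F F' : ℝ → ℝ} {a : ℝ}
    (hF : ∀ x, a ≤ x → HasDerivAt F (F' x) x) (hF' : ∀ x, a ≤ x → 0 ≤ F' x) :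
    MonotoneOn F (Ici a) :=
  monotoneOn_of_hasDerivWithinAt_nonneg (convex_Ici a)
    (fun x hx => (hF x hx).continuousAt.continuousWithinAt)
    (fun x hx => (hF x (interior_subset (s := Ici a) hx)).hasDerivWithinAt)
    (fun x hx => hF' x (interior_subset (s := Ici a) hx))

lemma antitoneOn_Ici_of_hasDerivAt_nonpos {F F' : ℝ → ℝ} {a : ℝ}
    (hF : ∀ x, a ≤ x → HasDerivAt F (F' x) x) (hF' : ∀ x, a ≤ x → F' x ≤ 0) :
    AntitoneOn F (Ici a) :=
  antitoneOn_of_hasDerivWithinAt_nonpos (convex_Ici a)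
    (fun x hx => (hF x hx).continuousAt.continuousWithinAt)
    (fun x hx => (hF x (interior_subset (s := Ici a) hx)).hasDerivWithinAt)
    (fun x hx => hF' x (interior_subset (s := Ici a) hx))

lemma hasDerivAt_exp_mul_mul {g : ℝ → ℝ} {g' k x : ℝ} (hg : HasDerivAt g g' x) :
    HasDerivAt (fun y => exp (k * y) * g y) (exp (k * x) * (g' + k * g x)) x := by
  have hexp : HasDerivAt (fun y => exp (k * y)) (exp (k * x) * k) x :=
    ((hasDerivAt_id x).const_mul k).exp.congr_deriv (by simp)
  exact (hexp.mul hg).congr_deriv (by ring)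

lemma not_integrableOn_Ici_of_forall_le {g : ℝ → ℝ} {b c : ℝ} (hc : 0 < c)
    (hg : ∀ x, b ≤ x → c ≤ g x) : ¬ IntegrableOn g (Ici b) := by
  intro hint
  have hconst : IntegrableOn (fun _ => c) (Ici b) := by
    refine hint.mono' aestronglyMeasurable_const ?_
    filter_upwards [ae_restrict_mem measurableSet_Ici] with x hx
    rw [Real.norm_of_nonneg hc.le]
    exact hg x hx
  rw [integrableOn_const_iff, Real.volume_Ici] at hconst
  simp [hc.ne'] at hconst

section Decay

variable {f f' f'' : ℝ → ℝ} {a Δ : ℝ}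

lemma deriv_nonpos_of_monotoneOn_of_integrableOn (hf : ∀ x, a ≤ x → HasDerivAt f (f' x) x)
    (hf' : MonotoneOn f' (Ici a)) (hf0 : ∀ x, a ≤ x → 0 ≤ f x)
    (hint : IntegrableOn f (Ici a)) (x : ℝ) (hx : a ≤ x) : f' x ≤ 0 := by
  by_contra! hpos
  have hlin : MonotoneOn (fun y => f y - f' x * y) (Ici x) :=
    monotoneOn_Ici_of_hasDerivAt_nonneg
      (fun y hy => ((hf y (hx.trans hy)).sub ((hasDerivAt_id y).const_mul (f' x))).congr_deriv
        (by simp))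
      (fun y hy => sub_nonneg.2 (hf' hx (hx.trans hy) hy))
  refine not_integrableOn_Ici_of_forall_le hpos (fun y hy => ?_)
    (hint.mono_set (Ici_subset_Ici.2 (by linarith : a ≤ x + 1)))
  have hgrowth : f x - f' x * x ≤ f y - f' x * y :=
    hlin (mem_Ici.2 le_rfl) (mem_Ici.2 (by linarith)) (by linarith)
  nlinarith [hf0 x hx]

lemma deriv_add_mul_nonpos (hΔ : 0 < Δ) (hf : ∀ x, a ≤ x → HasDerivAt f (f' x) x)
    (hf' : ∀ x, a ≤ x → HasDerivAt f' (f'' x) x) (hf'_nonpos : ∀ x, a ≤ x → f' x ≤ 0)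
    (hineq : ∀ x, a ≤ x → Δ ^ 2 * f x ≤ f'' x)
    (x : ℝ) (hx : a ≤ x) : f' x + Δ * f x ≤ 0 := by
  have hanti : AntitoneOn f (Ici a) := antitoneOn_Ici_of_hasDerivAt_nonpos hf hf'_nonpos
  have hbound : ∀ y, a ≤ y → f' y + Δ * f y ≤ Δ * f a := fun y hy => by
    nlinarith [hf'_nonpos y hy, hanti (mem_Ici.2 le_rfl) (mem_Ici.2 hy) hy]
  have hmono : MonotoneOn (fun y => exp (-Δ * y) * (f' y + Δ * f y)) (Ici a) :=
    monotoneOn_Ici_of_hasDerivAt_nonneg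
      (fun y hy => hasDerivAt_exp_mul_mul ((hf' y hy).add ((hf y hy).const_mul Δ)))
      (fun y hy => mul_nonneg (exp_pos _).le (by nlinarith [hineq y hy]))
  have htendsto : Tendsto (fun y => exp (-Δ * y) * (Δ * f a)) atTop (𝓝 0) := by
    simpa using (tendsto_exp_atBot.comp
      (tendsto_id.const_mul_atTop_of_neg (neg_neg_of_pos hΔ))).mul_const (Δ * f a)
  have hle : exp (-Δ * x) * (f' x + Δ * f x) ≤ 0 :=
    ge_of_tendsto htendsto <| (eventually_ge_atTop x).mono fun y hy =>
      (hmono (mem_Ici.2 hx) (mem_Ici.2 (hx.trans hy)) hy).trans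
        (mul_le_mul_of_nonneg_left (hbound y (hx.trans hy)) (exp_pos _).le)
  exact nonpos_of_mul_nonpos_right hle (exp_pos _)

lemma antitoneOn_exp_mul_of_deriv_add_mul_nonpos (hf : ∀ x, a ≤ x → HasDerivAt f (f' x) x)
    (hadd : ∀ x, a ≤ x → f' x + Δ * f x ≤ 0) :
    AntitoneOn (fun x => exp (Δ * x) * f x) (Ici a) :=
  antitoneOn_Ici_of_hasDerivAt_nonpos (fun x hx => hasDerivAt_exp_mul_mul (hf x hx))
    (fun x hx => mul_nonpos_of_nonneg_of_nonpos (exp_pos _).le (hadd x hx))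

lemma le_exp_mul_of_antitoneOn_exp_mul (hanti : AntitoneOn (fun x => exp (Δ * x) * f x) (Ici a))
    {s t : ℝ} (ht : a ≤ t) (hts : t ≤ s) : f s ≤ exp (Δ * (t - s)) * f t := by
  have h := hanti (mem_Ici.2 ht) (mem_Ici.2 (ht.trans hts)) hts
  rw [mul_sub, exp_sub, div_mul_eq_mul_div, le_div_iff₀ (exp_pos _)]
  simpa only [mul_comm (f s)] using h

end Decay

/-- Exponential decay for a nonnegative integrable function on `[1,∞)` satisfying the
convexity differential inequality `f'' ≥ Δ² f`. The constant `C` depends only on `Δ`. -/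
theorem stmt_1 (Δ : ℝ) (hΔ : 0 < Δ) :
    ∃ C : ℝ, 0 < C ∧ ∀ f f' f'' : ℝ → ℝ,
      (∀ s, 1 ≤ s → HasDerivAt f (f' s) s) →
      (∀ s, 1 ≤ s → HasDerivAt f' (f'' s) s) →
      ContinuousOn f'' (Set.Ici 1) →
      (∀ s, 1 ≤ s → 0 ≤ f s) →
      (∀ s, 1 ≤ s → Δ ^ 2 * f s ≤ f'' s) →
      IntegrableOn f (Set.Ici 1) →
      ∀ s, 2 ≤ s → f s ≤ C * Real.exp (-Δ * s) * ∫ t in (1:ℝ)..2, f t := by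
  refine ⟨exp (2 * Δ), exp_pos _, fun f f' f'' hf hf' _ hf0 hineq hint s hs => ?_⟩
  have hf'_mono : MonotoneOn f' (Ici 1) := monotoneOn_Ici_of_hasDerivAt_nonneg hf'
    fun x hx => (mul_nonneg (sq_nonneg Δ) (hf0 x hx)).trans (hineq x hx)
  have hf'_nonpos := deriv_nonpos_of_monotoneOn_of_integrableOn hf hf'_mono hf0 hint
  have hanti := antitoneOn_exp_mul_of_deriv_add_mul_nonpos hf
    (deriv_add_mul_nonpos hΔ hf hf' hf'_nonpos hineq)
  have hpointwise : ∀ t ∈ Icc (1 : ℝ) 2, f s ≤ exp (2 * Δ) * exp (-Δ * s) * f t := by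
    rintro t ⟨ht1, ht2⟩
    calc f s ≤ exp (Δ * (t - s)) * f t :=
          le_exp_mul_of_antitoneOn_exp_mul hanti ht1 (ht2.trans hs)
      _ ≤ exp (2 * Δ + -Δ * s) * f t := by
          gcongr
          · exact hf0 t ht1
          · nlinarith
      _ = exp (2 * Δ) * exp (-Δ * s) * f t := by rw [exp_add]
  have hf_int : IntervalIntegrable f volume 1 2 :=
    (intervalIntegrable_iff_integrableOn_Icc_of_le one_le_two).2 (hint.mono_set Icc_subset_Ici_self)
  have h := intervalIntegral.integral_mono_on one_le_two intervalIntegrable_const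
    (hf_int.const_mul _) hpointwise
  norm_num only [intervalIntegral.integral_const, intervalIntegral.integral_const_mul,
    one_smul] at h
  exact h
end

section
/- Let V₀, V₁, V₂ be symplectic vector spaces with symplectic forms ω₀, ω₁, ω₂, and let Λ₀₁ ⊂ V₀⁻ × V₁ and Λ₁₂ ⊂ V₁⁻ × V₂ be Lagrangian subspaces such that Λ₀₁ × Λ₁₂ is transverse to V₀ × Δ_{V₁} × V₂ in V₀⁻ × V₁ × V₁⁻ × V₂. Then the set Λ₀₂ = {(v₀,v₂) : ∃ v₁, (v₀,v₁) ∈ Λ₀₁ and (v₁,v₂) ∈ Λ₁₂} is a Lagrangian subspace of V₀⁻ × V₂. -/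
/-- A (linear) symplectic form, given as a plain bilinear-skew-nondegenerate pairing. -/
def IsSymplecticForm {V : Type*} [AddCommGroup V] [Module ℝ V] (ω : V → V → ℝ) : Prop :=
  (∀ (a : ℝ) (x y z : V), ω (a • x + y) z = a * ω x z + ω y z) ∧
  (∀ x y : V, ω x y = - ω y x) ∧
  (∀ x : V, (∀ y : V, ω x y = 0) → x = 0)

/-- A Lagrangian subspace: a set equal to its own `ω`-orthogonal complement. -/
def IsLagrangianSubspace {V : Type*} [AddCommGroup V] [Module ℝ V]
    (ω : V → V → ℝ) (L : Set V) : Prop :=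
  L = {x | ∀ y ∈ L, ω x y = 0}

/-!
The product `Λ = Λ₀₁ × Λ₁₂` is Lagrangian in `W = V₀⁻ × V₁ × V₁⁻ × V₂`, and the orthogonal of
`C = V₀ × Δ_{V₁} × V₂` consists of vectors `(0, e, e, 0)`. Isotropy of `Λ₀₂` is a direct
computation. For coisotropy, if `(v₀, v₂) ⊥ Λ₀₂` then `c = (v₀, 0, 0, v₂)` is orthogonal to
`Λ ∩ C`, so in finite dimension `c ∈ (Λ ∩ C)^⊥ = Λ^⊥ + C^⊥ = Λ + C^⊥`. Writing
`c = λ + (0, e, e, 0)` gives `λ = (v₀, -e, -e, v₂) ∈ Λ₀₁ × Λ₁₂`, so `-e` links `v₀` to `v₂`.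
-/

namespace LinearMap.BilinForm

variable {K V : Type*} [Field K] [AddCommGroup V] [Module K V] {B : LinearMap.BilinForm K V}

theorem orthogonal_sup (A A' : Submodule K V) :
    B.orthogonal (A ⊔ A') = B.orthogonal A ⊓ B.orthogonal A' := by
  refine le_antisymm (le_inf (orthogonal_le le_sup_left) (orthogonal_le le_sup_right)) ?_
  rintro x ⟨hA, hA'⟩ n hn
  obtain ⟨a, ha, a', ha', rfl⟩ := Submodule.mem_sup.mp hn
  rw [map_add, LinearMap.add_apply, hA a ha, hA' a' ha', add_zero]

theorem orthogonal_inf [FiniteDimensional K V] (hB : B.Nondegenerate) (hB₀ : B.IsRefl)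
    (A A' : Submodule K V) : B.orthogonal (A ⊓ A') = B.orthogonal A ⊔ B.orthogonal A' := by
  conv_lhs => rw [← orthogonal_orthogonal hB hB₀ A, ← orthogonal_orthogonal hB hB₀ A']
  rw [← orthogonal_sup, orthogonal_orthogonal hB hB₀]

end LinearMap.BilinForm

def prodForm {V W : Type*} (ω : V → V → ℝ) (σ : W → W → ℝ) : V × W → V × W → ℝ :=
  fun p q => ω p.1 q.1 + σ p.2 q.2

namespace IsSymplecticForm

variable {V W : Type*} [AddCommGroup V] [Module ℝ V] [AddCommGroup W] [Module ℝ W]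
  {ω : V → V → ℝ} {σ : W → W → ℝ}

theorem map_add_smul_left (hω : IsSymplecticForm ω) (a : ℝ) (x y z : V) :
    ω (a • x + y) z = a * ω x z + ω y z :=
  hω.1 a x y z

theorem antisymm (hω : IsSymplecticForm ω) (x y : V) : ω x y = -ω y x :=
  hω.2.1 x y

theorem eq_zero_of_forall (hω : IsSymplecticForm ω) {x : V} (hx : ∀ y, ω x y = 0) : x = 0 :=
  hω.2.2 x hx

theorem map_zero_left (hω : IsSymplecticForm ω) (z : V) : ω 0 z = 0 := by
  have h := hω.map_add_smul_left 1 0 0 z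
  rw [one_smul, add_zero, one_mul] at h
  linarith

theorem map_add_left (hω : IsSymplecticForm ω) (x y z : V) : ω (x + y) z = ω x z + ω y z := by
  simpa using hω.map_add_smul_left 1 x y z

theorem map_smul_left (hω : IsSymplecticForm ω) (a : ℝ) (x z : V) : ω (a • x) z = a * ω x z := by
  simpa [hω.map_zero_left] using hω.map_add_smul_left a x 0 z

theorem map_add_right (hω : IsSymplecticForm ω) (x y z : V) : ω z (x + y) = ω z x + ω z y := by
  rw [hω.antisymm, hω.map_add_left, hω.antisymm x, hω.antisymm y]; ring

theorem map_smul_right (hω : IsSymplecticForm ω) (a : ℝ) (x z : V) :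
    ω z (a • x) = a * ω z x := by
  rw [hω.antisymm, hω.map_smul_left, hω.antisymm x]; ring

def toBilinForm (hω : IsSymplecticForm ω) : LinearMap.BilinForm ℝ V :=
  LinearMap.mk₂ ℝ ω hω.map_add_left hω.map_smul_left (fun x y z => hω.map_add_right y z x)
    (fun a x z => hω.map_smul_right a z x)

@[simp] theorem toBilinForm_apply (hω : IsSymplecticForm ω) (x y : V) :
    hω.toBilinForm x y = ω x y :=
  rfl

theorem nondegenerate_toBilinForm (hω : IsSymplecticForm ω) : hω.toBilinForm.Nondegenerate :=
  ⟨fun _ => hω.eq_zero_of_forall, fun y hy => hω.eq_zero_of_forall fun x => by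
    rw [hω.antisymm, ← toBilinForm_apply hω, hy x, neg_zero]⟩

theorem isRefl_toBilinForm (hω : IsSymplecticForm ω) : hω.toBilinForm.IsRefl := fun x y h => by
  rw [toBilinForm_apply, hω.antisymm, ← toBilinForm_apply hω, h, neg_zero]

theorem map_zero_right (hω : IsSymplecticForm ω) (z : V) : ω z 0 = 0 :=
  map_zero (hω.toBilinForm z)

protected theorem neg (hω : IsSymplecticForm ω) : IsSymplecticForm (-ω) := by
  refine ⟨fun a x y z => ?_, fun x y => ?_, fun x hx => hω.eq_zero_of_forall fun y => ?_⟩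
  · simp only [Pi.neg_apply, hω.map_add_smul_left]; ring
  · simp only [Pi.neg_apply, hω.antisymm x y]
  · simpa using hx y

protected theorem prod (hω : IsSymplecticForm ω) (hσ : IsSymplecticForm σ) :
    IsSymplecticForm (prodForm ω σ) := by
  refine ⟨fun a x y z => ?_, fun x y => ?_, fun x hx => Prod.ext ?_ ?_⟩
  · simp only [prodForm, Prod.fst_add, Prod.snd_add, Prod.smul_fst, Prod.smul_snd,
      hω.map_add_smul_left, hσ.map_add_smul_left]
    ring
  · simp only [prodForm, hω.antisymm x.1, hσ.antisymm x.2]; ring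
  · exact hω.eq_zero_of_forall fun y => by simpa [prodForm, hσ.map_zero_right] using hx (y, 0)
  · exact hσ.eq_zero_of_forall fun y => by simpa [prodForm, hω.map_zero_right] using hx (0, y)

end IsSymplecticForm

namespace IsLagrangianSubspace

variable {V W : Type*} [AddCommGroup V] [Module ℝ V] [AddCommGroup W] [Module ℝ W]
  {ω : V → V → ℝ} {σ : W → W → ℝ} {L : Set V} {L' : Set W}

theorem mem_iff (hL : IsLagrangianSubspace ω L) {x : V} : x ∈ L ↔ ∀ y ∈ L, ω x y = 0 :=
  Set.ext_iff.mp hL x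

theorem zero_mem (hω : IsSymplecticForm ω) (hL : IsLagrangianSubspace ω L) : (0 : V) ∈ L :=
  hL.mem_iff.mpr fun y _ => hω.map_zero_left y

protected theorem prod (hω : IsSymplecticForm ω) (hσ : IsSymplecticForm σ)
    (hL : IsLagrangianSubspace ω L) (hL' : IsLagrangianSubspace σ L') :
    IsLagrangianSubspace (prodForm ω σ) (L ×ˢ L') := by
  refine Set.ext fun x => ⟨fun ⟨hx₁, hx₂⟩ y ⟨hy₁, hy₂⟩ => ?_, fun hx => ⟨?_, ?_⟩⟩
  · rw [prodForm, hL.mem_iff.mp hx₁ y.1 hy₁, hL'.mem_iff.mp hx₂ y.2 hy₂, add_zero]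
  · refine hL.mem_iff.mpr fun y hy => ?_
    simpa [prodForm, hσ.map_zero_right] using hx (y, 0) ⟨hy, hL'.zero_mem hσ⟩
  · refine hL'.mem_iff.mpr fun y hy => ?_
    simpa [prodForm, hω.map_zero_right] using hx (0, y) ⟨hL.zero_mem hω, hy⟩

theorem exists_submodule (hω : IsSymplecticForm ω) (hL : IsLagrangianSubspace ω L) :
    ∃ W : Submodule ℝ V, (W : Set V) = L ∧ hω.toBilinForm.orthogonal W = W := by
  refine ⟨{ carrier := L
            add_mem' := fun hx hy => hL.mem_iff.mpr fun z hz => ?_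
            zero_mem' := hL.zero_mem hω
            smul_mem' := fun a x hx => hL.mem_iff.mpr fun z hz => ?_ }, rfl, ?_⟩
  · rw [hω.map_add_left, hL.mem_iff.mp hx z hz, hL.mem_iff.mp hy z hz, add_zero]
  · rw [hω.map_smul_left, hL.mem_iff.mp hx z hz, mul_zero]
  · ext x
    simp only [LinearMap.BilinForm.mem_orthogonal_iff, Submodule.mem_mk,
      AddSubmonoid.mem_mk, AddSubsemigroup.mem_mk, hω.toBilinForm_apply]
    exact
      ⟨fun h => hL.mem_iff.mpr fun y hy => by rw [hω.antisymm, h y hy, neg_zero],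
        fun hx y hy => by rw [hω.antisymm, hL.mem_iff.mp hx y hy, neg_zero]⟩

end IsLagrangianSubspace

/-- `V₀ × Δ_{V₁} × V₂` inside `(V₀ × V₁) × (V₁ × V₂)`. -/
def middleDiagonal (R V0 V1 V2 : Type*) [Semiring R] [AddCommMonoid V0] [Module R V0]
    [AddCommMonoid V1] [Module R V1] [AddCommMonoid V2] [Module R V2] :
    Submodule R ((V0 × V1) × (V1 × V2)) :=
  LinearMap.eqLocus (LinearMap.snd R V0 V1 ∘ₗ LinearMap.fst R _ _)
    (LinearMap.fst R V1 V2 ∘ₗ LinearMap.snd R _ _)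

open SetRel

section Composition

variable {V0 V1 V2 : Type*} [AddCommGroup V0] [Module ℝ V0] [AddCommGroup V1] [Module ℝ V1]
  [AddCommGroup V2] [Module ℝ V2] {ω0 : V0 → V0 → ℝ} {ω1 : V1 → V1 → ℝ} {ω2 : V2 → V2 → ℝ}
  {Λ01 : Set (V0 × V1)} {Λ12 : Set (V1 × V2)}

theorem eq_of_mem_orthogonal_middleDiagonal (hω0 : IsSymplecticForm ω0)
    (hω1 : IsSymplecticForm ω1) (hω2 : IsSymplecticForm ω2) {k : (V0 × V1) × (V1 × V2)}
    (hk : ∀ n ∈ middleDiagonal ℝ V0 V1 V2,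
      prodForm (prodForm (-ω0) ω1) (prodForm (-ω1) ω2) n k = 0) :
    k.1.1 = 0 ∧ k.2.2 = 0 ∧ k.1.2 = k.2.1 := by
  have h (w0 : V0) (w1 : V1) (w2 : V2) :
      -ω0 w0 k.1.1 + ω1 w1 k.1.2 + (-ω1 w1 k.2.1 + ω2 w2 k.2.2) = 0 :=
    hk ((w0, w1), (w1, w2)) rfl
  refine ⟨hω0.eq_zero_of_forall fun w => ?_, hω2.eq_zero_of_forall fun w => ?_,
    sub_eq_zero.mp (hω1.eq_zero_of_forall fun w => ?_)⟩
  · simpa [hω1.map_zero_left, hω2.map_zero_left, hω0.antisymm w] using h w 0 0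
  · simpa [hω0.map_zero_left, hω1.map_zero_left, hω2.antisymm w] using h 0 0 w
  · have hsub : ω1 (k.1.2 - k.2.1) w = ω1 k.1.2 w - ω1 k.2.1 w := by
      simp only [← hω1.toBilinForm_apply, map_sub, LinearMap.sub_apply]
    have h1 := h 0 w 0
    rw [hω0.map_zero_left, hω2.map_zero_left, hω1.antisymm w, hω1.antisymm w] at h1
    rw [hsub]
    linarith

theorem comp_subset_orthogonal (h01 : IsLagrangianSubspace (prodForm (-ω0) ω1) Λ01)
    (h12 : IsLagrangianSubspace (prodForm (-ω1) ω2) Λ12) :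
    Λ01 ○ Λ12 ⊆ {x | ∀ y ∈ Λ01 ○ Λ12, prodForm (-ω0) ω2 x y = 0} := by
  rintro ⟨v0, v2⟩ ⟨v1, hv01, hv12⟩ ⟨w0, w2⟩ ⟨w1, hw01, hw12⟩
  have e01 := h01.mem_iff.mp hv01 (w0, w1) hw01
  have e12 := h12.mem_iff.mp hv12 (w1, w2) hw12
  simp only [prodForm, Pi.neg_apply] at e01 e12 ⊢
  linarith

theorem orthogonal_subset_comp [FiniteDimensional ℝ V0] [FiniteDimensional ℝ V1]
    [FiniteDimensional ℝ V2] (hω0 : IsSymplecticForm ω0) (hω1 : IsSymplecticForm ω1)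
    (hω2 : IsSymplecticForm ω2) (h01 : IsLagrangianSubspace (prodForm (-ω0) ω1) Λ01)
    (h12 : IsLagrangianSubspace (prodForm (-ω1) ω2) Λ12) :
    {x | ∀ y ∈ Λ01 ○ Λ12, prodForm (-ω0) ω2 x y = 0} ⊆ Λ01 ○ Λ12 := by
  rintro ⟨v0, v2⟩ hv
  have hσ01 := hω0.neg.prod hω1
  have hσ12 := hω1.neg.prod hω2
  have hΩ := hσ01.prod hσ12
  obtain ⟨Λ, hΛ, hΛ_lag⟩ := (h01.prod hσ01 hσ12 h12).exists_submodule hΩ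
  have hc : ((v0, 0), (0, v2)) ∈
      hΩ.toBilinForm.orthogonal (Λ ⊓ middleDiagonal ℝ V0 V1 V2) := by
    rintro n ⟨hnΛ, hn⟩
    rw [hΛ] at hnΛ
    have hcomp : (n.1.1, n.2.2) ∈ Λ01 ○ Λ12 :=
      ⟨n.1.2, hnΛ.1, (show n.1.2 = n.2.1 from hn) ▸ hnΛ.2⟩
    have := hv _ hcomp
    simp only [prodForm, Pi.neg_apply, hΩ.toBilinForm_apply, hω1.map_zero_right] at this ⊢
    rw [hω0.antisymm n.1.1, hω2.antisymm n.2.2]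
    linarith
  rw [LinearMap.BilinForm.orthogonal_inf hΩ.nondegenerate_toBilinForm hΩ.isRefl_toBilinForm,
    hΛ_lag] at hc
  obtain ⟨l, hl, k, hk, hlk⟩ := Submodule.mem_sup.mp hc
  obtain ⟨hk0, hk2, hk1⟩ := eq_of_mem_orthogonal_middleDiagonal hω0 hω1 hω2 hk
  rw [← SetLike.mem_coe, hΛ] at hl
  have hl_eq : l = ((v0, -k.1.2), (-k.1.2, v2)) := by
    rw [eq_sub_of_add_eq hlk]
    ext <;> simp [hk0, hk1, hk2]
  rw [hl_eq] at hl
  exact ⟨-k.1.2, hl⟩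

end Composition

theorem stmt_3_general {V0 V1 V2 : Type*}
    [AddCommGroup V0] [Module ℝ V0] [FiniteDimensional ℝ V0]
    [AddCommGroup V1] [Module ℝ V1] [FiniteDimensional ℝ V1]
    [AddCommGroup V2] [Module ℝ V2] [FiniteDimensional ℝ V2]
    (ω0 : V0 → V0 → ℝ) (ω1 : V1 → V1 → ℝ) (ω2 : V2 → V2 → ℝ)
    (hω0 : IsSymplecticForm ω0) (hω1 : IsSymplecticForm ω1) (hω2 : IsSymplecticForm ω2)
    (Λ01 : Set (V0 × V1)) (Λ12 : Set (V1 × V2))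
    (h01 : IsLagrangianSubspace
      (fun p q : V0 × V1 => -(ω0 p.1 q.1) + ω1 p.2 q.2) Λ01)
    (h12 : IsLagrangianSubspace
      (fun p q : V1 × V2 => -(ω1 p.1 q.1) + ω2 p.2 q.2) Λ12) :
    IsLagrangianSubspace (fun p q : V0 × V2 => -(ω0 p.1 q.1) + ω2 p.2 q.2)
      {p : V0 × V2 | ∃ v1 : V1, (p.1, v1) ∈ Λ01 ∧ (v1, p.2) ∈ Λ12} :=
  Set.Subset.antisymm (comp_subset_orthogonal h01 h12)
    (orthogonal_subset_comp hω0 hω1 hω2 h01 h12)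

/-- Linear composition of Lagrangian correspondences: if `Λ₀₁ × Λ₁₂` is transverse to
`V₀ × Δ_{V₁} × V₂`, then `Λ₀₁ ∘ Λ₁₂` is a Lagrangian subspace of `V₀⁻ × V₂`. -/
theorem stmt_3 {V0 V1 V2 : Type*}
    [AddCommGroup V0] [Module ℝ V0] [FiniteDimensional ℝ V0]
    [AddCommGroup V1] [Module ℝ V1] [FiniteDimensional ℝ V1]
    [AddCommGroup V2] [Module ℝ V2] [FiniteDimensional ℝ V2]
    (ω0 : V0 → V0 → ℝ) (ω1 : V1 → V1 → ℝ) (ω2 : V2 → V2 → ℝ)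
    (hω0 : IsSymplecticForm ω0) (hω1 : IsSymplecticForm ω1) (hω2 : IsSymplecticForm ω2)
    (Λ01 : Set (V0 × V1)) (Λ12 : Set (V1 × V2))
    (h01 : IsLagrangianSubspace
      (fun p q : V0 × V1 => -(ω0 p.1 q.1) + ω1 p.2 q.2) Λ01)
    (h12 : IsLagrangianSubspace
      (fun p q : V1 × V2 => -(ω1 p.1 q.1) + ω2 p.2 q.2) Λ12)
    -- transversality: `Λ₀₁ × Λ₁₂ + (V₀ × Δ_{V₁} × V₂)` is everything
    (htrans : ∀ x : (V0 × V1) × (V1 × V2), ∃ a ∈ Λ01, ∃ b ∈ Λ12,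
      ∃ (d0 : V0) (d1 : V1) (d2 : V2),
        x = ((a.1 + d0, a.2 + d1), (b.1 + d1, b.2 + d2))) :
    IsLagrangianSubspace (fun p q : V0 × V2 => -(ω0 p.1 q.1) + ω2 p.2 q.2)
      {p : V0 × V2 | ∃ v1 : V1, (p.1, v1) ∈ Λ01 ∧ (v1, p.2) ∈ Λ12} :=
  stmt_3_general ω0 ω1 ω2 hω0 hω1 hω2 Λ01 Λ12 h01 h12
end

section
/- Let V₀, V₁, V₂ be symplectic vector spaces with Λ₀₁, Λ₁₂ as above (product transverse to V₀ × Δ_{V₁} × V₂), and Λ₀₂ the composed Lagrangian. Then there is a constant C such that for every (ξ₀₂', ξ₁', ξ₁) ∈ V₀ × V₂ × V₁ × V₁: |π₀₂⊥ ξ₀₂'| ≤ C (|π⊥(ξ₀₂',ξ₁',ξ₁)| + |ξ₁' − ξ₁|), where π₀₂⊥ is orthogonal projection onto the orthogonal complement of Λ₀₂ in V₀ × V₂ and π⊥ is orthogonal projection onto the orthogonal complement of (Λ₀₁ × Λ₁₂)ᵀ. -/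
/-!
A point of `(Λ₀₁ × Λ₁₂)ᵀ` with `ξ₁' = ξ₁` has its `V₀ × V₂` component in `Λ₀₂`. Hence on the
finite-dimensional subspace `(Λ₀₁ × Λ₁₂)ᵀ` the map `π₀₂⊥ ∘ pr₀₂` vanishes on the kernel of
`ξ₁' − ξ₁`, so it is bounded by a multiple of `|ξ₁' − ξ₁|` there. Splitting an arbitrary point
into its components along `(Λ₀₁ × Λ₁₂)ᵀ` and its orthogonal complement gives the estimate.
-/

open Submodule

theorem LinearMap.exists_norm_le_mul_norm_of_ker_le {𝕜 E F G : Type*} [NontriviallyNormedField 𝕜]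
    [CompleteSpace 𝕜] [NormedAddCommGroup E] [NormedSpace 𝕜 E] [FiniteDimensional 𝕜 E]
    [NormedAddCommGroup F] [NormedSpace 𝕜 F] [NormedAddCommGroup G] [NormedSpace 𝕜 G]
    (f : E →ₗ[𝕜] F) (g : E →ₗ[𝕜] G) (hker : ker f ≤ ker g) :
    ∃ C ≥ 0, ∀ x, ‖g x‖ ≤ C * ‖f x‖ := by
  let h : range f →L[𝕜] G :=
    LinearMap.toContinuousLinearMap ((ker f).liftQ g hker ∘ₗ f.quotKerEquivRange.symm.toLinearMap)
  have hgh (x : E) : g x = h ⟨f x, mem_range_self f x⟩ := by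
    simp [h, f.quotKerEquivRange_symm_apply_image]
  refine ⟨‖h‖, norm_nonneg h, fun x => ?_⟩
  rw [hgh]
  exact h.le_opNorm _

theorem exists_norm_le_mul_norm_starProjection_orthogonal_add_norm {𝕜 W F G : Type*} [RCLike 𝕜]
    [NormedAddCommGroup W] [InnerProductSpace 𝕜 W] [NormedAddCommGroup F] [NormedSpace 𝕜 F]
    [NormedAddCommGroup G] [NormedSpace 𝕜 G] (T : Submodule 𝕜 W) [FiniteDimensional 𝕜 T]
    (g : W →L[𝕜] F) (f : W →L[𝕜] G) (hfg : ∀ t ∈ T, f t = 0 → g t = 0) :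
    ∃ C > 0, ∀ w, ‖g w‖ ≤ C * (‖Tᗮ.starProjection w‖ + ‖f w‖) := by
  obtain ⟨C, hC0, hC⟩ := LinearMap.exists_norm_le_mul_norm_of_ker_le
    ((f : W →ₗ[𝕜] G) ∘ₗ T.subtype) ((g : W →ₗ[𝕜] F) ∘ₗ T.subtype)
    fun t ht => hfg t t.2 ht
  refine ⟨C * ‖f‖ + C + ‖g‖ + 1, by positivity, fun w => ?_⟩
  set a := T.starProjection w
  set b := Tᗮ.starProjection w
  have hw : w = a + b := (T.starProjection_add_starProjection_orthogonal w).symm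
  have ha : ‖g a‖ ≤ C * ‖f a‖ := hC ⟨a, T.starProjection_apply_mem w⟩
  have hfa : ‖f a‖ ≤ ‖f w‖ + ‖f‖ * ‖b‖ := by
    calc ‖f a‖ = ‖f w - f b‖ := by rw [hw, map_add, add_sub_cancel_right]
      _ ≤ ‖f w‖ + ‖f b‖ := norm_sub_le _ _
      _ ≤ ‖f w‖ + ‖f‖ * ‖b‖ := by gcongr; exact f.le_opNorm b
  calc ‖g w‖ ≤ ‖g a‖ + ‖g b‖ := by rw [hw, map_add]; exact norm_add_le _ _
    _ ≤ C * (‖f w‖ + ‖f‖ * ‖b‖) + ‖g‖ * ‖b‖ := by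
      gcongr
      · exact ha.trans (by gcongr)
      · exact g.le_opNorm b
    _ ≤ (C * ‖f‖ + C + ‖g‖ + 1) * (‖b‖ + ‖f w‖) := by
      nlinarith [mul_nonneg (mul_nonneg hC0 (norm_nonneg f)) (norm_nonneg (f w)),
        mul_nonneg hC0 (norm_nonneg b), mul_nonneg (norm_nonneg g) (norm_nonneg (f w)),
        norm_nonneg b, norm_nonneg (f w)]

theorem stmt_5_general {V0 V1 V2 : Type*}
    [NormedAddCommGroup V0] [InnerProductSpace ℝ V0] [FiniteDimensional ℝ V0]
    [NormedAddCommGroup V1] [InnerProductSpace ℝ V1] [FiniteDimensional ℝ V1]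
    [NormedAddCommGroup V2] [InnerProductSpace ℝ V2] [FiniteDimensional ℝ V2]
    (Λ01 : Set (V0 × V1)) (Λ12 : Set (V1 × V2))
    -- the composed Lagrangian `Λ₀₂ ⊂ V₀ × V₂` (with the ℓ² inner product)
    (Λ02 : Submodule ℝ (WithLp 2 (V0 × V2)))
    (hΛ02 : ∀ p : WithLp 2 (V0 × V2), p ∈ Λ02 ↔ ∃ v1 : V1,
      ((WithLp.equiv 2 (V0 × V2) p).1, v1) ∈ Λ01 ∧
      (v1, (WithLp.equiv 2 (V0 × V2) p).2) ∈ Λ12)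
    -- the transposed Lagrangian `(Λ₀₁ × Λ₁₂)ᵀ ⊂ V₀ × V₂ × V₁ × V₁`
    (T : Submodule ℝ (WithLp 2 (WithLp 2 (V0 × V2) × WithLp 2 (V1 × V1))))
    (hT : ∀ w : WithLp 2 (WithLp 2 (V0 × V2) × WithLp 2 (V1 × V1)), w ∈ T ↔
      (((WithLp.equiv 2 (V0 × V2)
          ((WithLp.equiv 2 (WithLp 2 (V0 × V2) × WithLp 2 (V1 × V1)) w).1)).1,
        (WithLp.equiv 2 (V1 × V1)
          ((WithLp.equiv 2 (WithLp 2 (V0 × V2) × WithLp 2 (V1 × V1)) w).2)).1) ∈ Λ01 ∧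
       ((WithLp.equiv 2 (V1 × V1)
          ((WithLp.equiv 2 (WithLp 2 (V0 × V2) × WithLp 2 (V1 × V1)) w).2)).2,
        (WithLp.equiv 2 (V0 × V2)
          ((WithLp.equiv 2 (WithLp 2 (V0 × V2) × WithLp 2 (V1 × V1)) w).1)).2) ∈ Λ12)) :
    ∃ C : ℝ, 0 < C ∧ ∀ w : WithLp 2 (WithLp 2 (V0 × V2) × WithLp 2 (V1 × V1)),
      ‖(Submodule.orthogonalProjectionOnto Λ02ᗮ
          ((WithLp.equiv 2 (WithLp 2 (V0 × V2) × WithLp 2 (V1 × V1)) w).1) :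
        WithLp 2 (V0 × V2))‖ ≤ C * (
        ‖(Submodule.orthogonalProjectionOnto Tᗮ w :
          WithLp 2 (WithLp 2 (V0 × V2) × WithLp 2 (V1 × V1)))‖ +
        ‖(WithLp.equiv 2 (V1 × V1)
            ((WithLp.equiv 2 (WithLp 2 (V0 × V2) × WithLp 2 (V1 × V1)) w).2)).1 -
         (WithLp.equiv 2 (V1 × V1)
            ((WithLp.equiv 2 (WithLp 2 (V0 × V2) × WithLp 2 (V1 × V1)) w).2)).2‖) := by
  let e := WithLp.prodContinuousLinearEquiv 2 ℝ (WithLp 2 (V0 × V2)) (WithLp 2 (V1 × V1))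
  let e1 := WithLp.prodContinuousLinearEquiv 2 ℝ V1 V1
  let g := Λ02ᗮ.starProjection ∘L ContinuousLinearMap.fst ℝ _ _ ∘L e.toContinuousLinearMap
  let f := (ContinuousLinearMap.fst ℝ V1 V1 - ContinuousLinearMap.snd ℝ V1 V1) ∘L
    e1.toContinuousLinearMap ∘L ContinuousLinearMap.snd ℝ _ _ ∘L e.toContinuousLinearMap
  have hfg : ∀ t ∈ T, f t = 0 → g t = 0 := by
    intro t ht hft
    obtain ⟨h01, h12⟩ := (hT t).1 ht
    have hdiag : (WithLp.equiv 2 (V1 × V1) (WithLp.equiv 2 _ t).2).1 =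
        (WithLp.equiv 2 (V1 × V1) (WithLp.equiv 2 _ t).2).2 := sub_eq_zero.1 hft
    rw [← hdiag] at h12
    exact starProjection_orthogonal_apply_eq_zero ((hΛ02 _).2 ⟨_, h01, h12⟩)
  exact exists_norm_le_mul_norm_starProjection_orthogonal_add_norm T g f hfg

/-- Quantitative transversality, second estimate: every `(ξ₀₂', ξ₁', ξ₁)` satisfies
`|π₀₂⊥ ξ₀₂'| ≤ C (|π⊥(ξ₀₂',ξ₁',ξ₁)| + |ξ₁' − ξ₁|)`, where `π₀₂⊥` is the orthogonal
projection onto the orthogonal complement of the composed Lagrangian `Λ₀₂` and `π⊥`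
the orthogonal projection onto the orthogonal complement of `(Λ₀₁ × Λ₁₂)ᵀ`. -/
theorem stmt_5 {V0 V1 V2 : Type*}
    [NormedAddCommGroup V0] [InnerProductSpace ℝ V0] [FiniteDimensional ℝ V0]
    [NormedAddCommGroup V1] [InnerProductSpace ℝ V1] [FiniteDimensional ℝ V1]
    [NormedAddCommGroup V2] [InnerProductSpace ℝ V2] [FiniteDimensional ℝ V2]
    (ω0 : V0 → V0 → ℝ) (ω1 : V1 → V1 → ℝ) (ω2 : V2 → V2 → ℝ)
    (hω0 : IsSymplecticForm ω0) (hω1 : IsSymplecticForm ω1) (hω2 : IsSymplecticForm ω2)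
    (Λ01 : Set (V0 × V1)) (Λ12 : Set (V1 × V2))
    (h01 : IsLagrangianSubspace
      (fun p q : V0 × V1 => -(ω0 p.1 q.1) + ω1 p.2 q.2) Λ01)
    (h12 : IsLagrangianSubspace
      (fun p q : V1 × V2 => -(ω1 p.1 q.1) + ω2 p.2 q.2) Λ12)
    (htrans : ∀ x : (V0 × V1) × (V1 × V2), ∃ a ∈ Λ01, ∃ b ∈ Λ12,
      ∃ (d0 : V0) (d1 : V1) (d2 : V2),
        x = ((a.1 + d0, a.2 + d1), (b.1 + d1, b.2 + d2)))
    -- the composed Lagrangian `Λ₀₂ ⊂ V₀ × V₂` (with the ℓ² inner product)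
    (Λ02 : Submodule ℝ (WithLp 2 (V0 × V2)))
    (hΛ02 : ∀ p : WithLp 2 (V0 × V2), p ∈ Λ02 ↔ ∃ v1 : V1,
      ((WithLp.equiv 2 (V0 × V2) p).1, v1) ∈ Λ01 ∧
      (v1, (WithLp.equiv 2 (V0 × V2) p).2) ∈ Λ12)
    -- the transposed Lagrangian `(Λ₀₁ × Λ₁₂)ᵀ ⊂ V₀ × V₂ × V₁ × V₁`
    (T : Submodule ℝ (WithLp 2 (WithLp 2 (V0 × V2) × WithLp 2 (V1 × V1))))
    (hT : ∀ w : WithLp 2 (WithLp 2 (V0 × V2) × WithLp 2 (V1 × V1)), w ∈ T ↔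
      (((WithLp.equiv 2 (V0 × V2)
          ((WithLp.equiv 2 (WithLp 2 (V0 × V2) × WithLp 2 (V1 × V1)) w).1)).1,
        (WithLp.equiv 2 (V1 × V1)
          ((WithLp.equiv 2 (WithLp 2 (V0 × V2) × WithLp 2 (V1 × V1)) w).2)).1) ∈ Λ01 ∧
       ((WithLp.equiv 2 (V1 × V1)
          ((WithLp.equiv 2 (WithLp 2 (V0 × V2) × WithLp 2 (V1 × V1)) w).2)).2,
        (WithLp.equiv 2 (V0 × V2)
          ((WithLp.equiv 2 (WithLp 2 (V0 × V2) × WithLp 2 (V1 × V1)) w).1)).2) ∈ Λ12)) :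
    ∃ C : ℝ, 0 < C ∧ ∀ w : WithLp 2 (WithLp 2 (V0 × V2) × WithLp 2 (V1 × V1)),
      ‖(Submodule.orthogonalProjectionOnto Λ02ᗮ
          ((WithLp.equiv 2 (WithLp 2 (V0 × V2) × WithLp 2 (V1 × V1)) w).1) :
        WithLp 2 (V0 × V2))‖ ≤ C * (
        ‖(Submodule.orthogonalProjectionOnto Tᗮ w :
          WithLp 2 (WithLp 2 (V0 × V2) × WithLp 2 (V1 × V1)))‖ +
        ‖(WithLp.equiv 2 (V1 × V1)
            ((WithLp.equiv 2 (WithLp 2 (V0 × V2) × WithLp 2 (V1 × V1)) w).2)).1 -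
         (WithLp.equiv 2 (V1 × V1)
            ((WithLp.equiv 2 (WithLp 2 (V0 × V2) × WithLp 2 (V1 × V1)) w).2)).2‖) :=
  stmt_5_general Λ01 Λ12 Λ02 hΛ02 T hT
end

section
/- Compatibility of two graph linearizations: let X be a finite-dimensional vector space, N ⊂ X a C¹ submanifold through 0, and Δ ⊂ X a subspace transverse to N at 0. Then there exists a local C¹ diffeomorphism Φ of X near 0 with Φ(0) = 0 and dΦ(0) = Id such that Φ(T₀N ∩ U) ⊂ N and Φ(Δ ∩ U) ⊂ Δ for some neighborhood U of 0. -/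
/-!
Since `ker dg(0) + Δ = X`, the kernel `K := ker dg(0)` has a complement `C` inside `Δ`. By the
implicit function theorem for the pair `(g, π)`, with `π` the projection onto `K` along `C`, the
zero set of `g` is near `0` the graph of a `C¹` map `k ↦ ψ k - k` from `K` to `C`, with `ψ`
tangent to the inclusion of `K`. The shear `Φ x = x + (ψ (π x) - π x)` then maps `K` into `N`,
has derivative the identity at `0`, and moves points only in the direction `C ⊆ Δ`, so it
preserves `Δ`.
-/

open Filter Set Topology

section

variable {X Y : Type*} [NormedAddCommGroup X] [NormedSpace ℝ X] [FiniteDimensional ℝ X]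
  [NormedAddCommGroup Y] [NormedSpace ℝ Y] [CompleteSpace Y]

theorem ContDiffAt.exists_graph_over_ker_fderiv {g : X → Y} {C : Submodule ℝ X}
    (hg : ContDiffAt ℝ 1 g 0) (hsurj : Function.Surjective (fderiv ℝ g 0))
    (hC : IsCompl (LinearMap.ker (fderiv ℝ g 0 : X →ₗ[ℝ] Y)) C) :
    ∃ ψ : LinearMap.ker (fderiv ℝ g 0 : X →ₗ[ℝ] Y) → X, ψ 0 = 0 ∧
      HasFDerivAt ψ (Submodule.subtypeL _) 0 ∧ ContDiffAt ℝ 1 ψ 0 ∧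
      ∀ᶠ k in 𝓝 0, g (ψ k) = g 0 ∧ ψ k - k ∈ C := by
  set K := LinearMap.ker (fderiv ℝ g 0 : X →ₗ[ℝ] Y)
  set π : X →L[ℝ] K := (K.projectionOnto C hC).toContinuousLinearMap
  let φ : ImplicitFunctionData ℝ X Y K :=
    { leftFun := g
      leftDeriv := fderiv ℝ g 0
      rightFun := π
      rightDeriv := π
      pt := 0
      hasStrictFDerivAt_leftFun := hg.hasStrictFDerivAt one_ne_zero
      hasStrictFDerivAt_rightFun := π.hasStrictFDerivAt
      range_leftDeriv := LinearMap.range_eq_top.2 hsurj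
      range_rightDeriv := Submodule.range_projectionOnto hC
      isCompl_ker := by rw [← Submodule.ker_projectionOnto hC] at hC; exact hC }
  have hpt : φ.prodFun φ.pt = (g 0, 0) := by simp [φ]
  refine ⟨φ.implicitFunction (g 0), ?_, ?_, ?_, ?_⟩
  · simpa [φ] using φ.implicitFunction_apply_image.self_of_nhds
  · have := φ.hasStrictFDerivAt_implicitFunction K.subtypeL ?_ ?_
    · simpa [φ] using this.hasFDerivAt
    · ext k; simp [φ, π]
    · ext k; simp [φ]
  · have h := φ.contDiffAt_implicitFunction hg π.contDiff.contDiffAt one_ne_zero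
    rw [hpt] at h
    exact h.comp (f := fun k : K => (g 0, k)) 0 (by fun_prop)
  · filter_upwards [(hpt ▸ φ.prodFun_implicitFunction).curry_nhds.self_of_nhds] with k hk
    obtain ⟨hgk, hπk⟩ := Prod.ext_iff.1 hk
    refine ⟨hgk, (Submodule.projectionOnto_apply_eq_zero_iff hC).1 ?_⟩
    rw [map_sub, Submodule.projectionOnto_apply_left]
    exact sub_eq_zero.2 hπk

theorem ContDiffAt.exists_shear_linearizing_fiber {g : X → Y} {C : Submodule ℝ X}
    (hg : ContDiffAt ℝ 1 g 0) (hsurj : Function.Surjective (fderiv ℝ g 0))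
    (hC : IsCompl (LinearMap.ker (fderiv ℝ g 0 : X →ₗ[ℝ] Y)) C) :
    ∃ Φ : X → X, Φ 0 = 0 ∧ HasFDerivAt Φ (ContinuousLinearMap.id ℝ X) 0 ∧
      ContDiffAt ℝ 1 Φ 0 ∧ ∀ᶠ x in 𝓝 0, Φ x - x ∈ C ∧
        (x ∈ LinearMap.ker (fderiv ℝ g 0 : X →ₗ[ℝ] Y) → g (Φ x) = g 0) := by
  set K := LinearMap.ker (fderiv ℝ g 0 : X →ₗ[ℝ] Y)
  obtain ⟨ψ, hψ0, hψ', hψ, hψg⟩ := hg.exists_graph_over_ker_fderiv hsurj hC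
  set π : X →L[ℝ] K := (K.projectionOnto C hC).toContinuousLinearMap
  have hπ0 : π 0 = 0 := map_zero π
  refine ⟨fun x => x + (ψ (π x) - π x), by simp [hψ0], ?_, ?_, ?_⟩
  · have := (hasFDerivAt_id (0 : X)).add
      (((hπ0 ▸ hψ').comp 0 π.hasFDerivAt).sub (K.subtypeL.comp π).hasFDerivAt)
    rwa [sub_self, add_zero] at this
  · exact contDiffAt_id.add (((hπ0 ▸ hψ).comp 0 π.contDiff.contDiffAt).sub
      (K.subtypeL.comp π).contDiff.contDiffAt)
  · have hπ : Tendsto π (𝓝 0) (𝓝 0) := hπ0 ▸ π.continuous.tendsto 0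
    filter_upwards [hπ.eventually hψg] with x ⟨hgx, hCx⟩
    refine ⟨by simpa using hCx, fun hx => ?_⟩
    have hπx : π x = ⟨x, hx⟩ := Submodule.projectionOnto_apply_of_mem_left hC hx
    simpa [hπx] using hgx

theorem ContDiffAt.exists_isOpen_injOn_contDiffOn {𝕂 E F : Type*} [RCLike 𝕂]
    [NormedAddCommGroup E] [NormedSpace 𝕂 E] [CompleteSpace E]
    [NormedAddCommGroup F] [NormedSpace 𝕂 F] {f : E → F} {f' : E ≃L[𝕂] F} {a : E}
    (hf : ContDiffAt 𝕂 1 f a) (hf' : HasFDerivAt f (f' : E →L[𝕂] F) a) :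
    ∃ V, IsOpen V ∧ a ∈ V ∧ ContDiffOn 𝕂 1 f V ∧ InjOn f V := by
  set e := hf.toOpenPartialHomeomorph f hf' one_ne_zero
  obtain ⟨u, hu, hfu⟩ := hf.contDiffOn le_rfl (by simp)
  exact ⟨e.source ∩ interior u, e.open_source.inter isOpen_interior,
    ⟨hf.mem_toOpenPartialHomeomorph_source hf' one_ne_zero, mem_interior_iff_mem_nhds.2 hu⟩,
    hfu.mono (inter_subset_right.trans interior_subset), e.injOn.mono inter_subset_left⟩

end

theorem stmt_17_general {X Y : Type*}
    [NormedAddCommGroup X] [NormedSpace ℝ X] [FiniteDimensional ℝ X]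
    [NormedAddCommGroup Y] [NormedSpace ℝ Y] [FiniteDimensional ℝ Y]
    (N : Set X) (g : X → Y) (U : Set X)
    (hU : IsOpen U) (h0U : (0:X) ∈ U)
    (hg : ContDiffOn ℝ 1 g U) (hg0 : g 0 = 0)
    (hsurj : Function.Surjective (fderiv ℝ g 0))
    (hNU : N ∩ U = {x ∈ U | g x = 0})
    (Δ : Submodule ℝ X)
    (htrans : LinearMap.ker (fderiv ℝ g 0 : X →ₗ[ℝ] Y) ⊔ Δ = ⊤) :
    ∃ (Φ : X → X) (V : Set X), IsOpen V ∧ (0:X) ∈ V ∧ Φ 0 = 0 ∧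
      HasFDerivAt Φ (ContinuousLinearMap.id ℝ X) 0 ∧
      ContDiffOn ℝ 1 Φ V ∧ Set.InjOn Φ V ∧
      (∀ x ∈ (LinearMap.ker (fderiv ℝ g 0 : X →ₗ[ℝ] Y) : Submodule ℝ X).carrier ∩ V, Φ x ∈ N) ∧
      (∀ x ∈ (Δ : Set X) ∩ V, Φ x ∈ (Δ : Set X)) := by
  obtain ⟨C, hCΔ, hCK⟩ := (codisjoint_iff.2 htrans).symm.exists_isCompl
  obtain ⟨Φ, hΦ0, hΦ', hΦ, hΦ_near⟩ :=
    (hg.contDiffAt (hU.mem_nhds h0U)).exists_shear_linearizing_fiber hsurj hCK.symm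
  obtain ⟨V, hV, h0V, hΦV, hΦinj⟩ :=
    hΦ.exists_isOpen_injOn_contDiffOn (f' := .refl ℝ X) (by simpa using hΦ')
  have hΦU : ∀ᶠ x in 𝓝 0, Φ x ∈ U :=
    hΦ.continuousAt.preimage_mem_nhds (by rw [hΦ0]; exact hU.mem_nhds h0U)
  obtain ⟨W, hW, hWo, h0W⟩ := eventually_nhds_iff.1 (hΦ_near.and hΦU)
  refine ⟨Φ, V ∩ W, hV.inter hWo, ⟨h0V, h0W⟩, hΦ0, hΦ', hΦV.mono inter_subset_left,
    hΦinj.mono inter_subset_left, ?_, ?_⟩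
  · rintro x ⟨hxK, -, hxW⟩
    obtain ⟨⟨-, hgx⟩, hxU⟩ := hW x hxW
    have hΦx : Φ x ∈ N ∩ U := hNU ▸ ⟨hxU, (hgx hxK).trans hg0⟩
    exact hΦx.1
  · rintro x ⟨hxΔ, -, hxW⟩
    simpa using Δ.add_mem hxΔ (hCΔ (hW x hxW).1.1)

/-- Compatibility of two graph linearizations: if `N ⊂ X` is a `C¹` submanifold through
`0` (cut out by a submersion `g`) and `Δ ⊂ X` is a subspace transverse to `N` at `0`,
then there is a local `C¹` diffeomorphism `Φ` of `X` near `0` with `Φ(0) = 0`,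
`dΦ(0) = Id`, `Φ(T₀N ∩ U) ⊂ N` and `Φ(Δ ∩ U) ⊂ Δ`. -/
theorem stmt_17 {X Y : Type*}
    [NormedAddCommGroup X] [NormedSpace ℝ X] [FiniteDimensional ℝ X]
    [NormedAddCommGroup Y] [NormedSpace ℝ Y] [FiniteDimensional ℝ Y]
    (N : Set X) (g : X → Y) (U : Set X)
    (hU : IsOpen U) (h0U : (0:X) ∈ U) (h0N : (0:X) ∈ N)
    (hg : ContDiffOn ℝ 1 g U) (hg0 : g 0 = 0)
    (hsurj : Function.Surjective (fderiv ℝ g 0))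
    (hNU : N ∩ U = {x ∈ U | g x = 0})
    (Δ : Submodule ℝ X)
    (htrans : LinearMap.ker (fderiv ℝ g 0 : X →ₗ[ℝ] Y) ⊔ Δ = ⊤) :
    ∃ (Φ : X → X) (V : Set X), IsOpen V ∧ (0:X) ∈ V ∧ Φ 0 = 0 ∧
      HasFDerivAt Φ (ContinuousLinearMap.id ℝ X) 0 ∧
      ContDiffOn ℝ 1 Φ V ∧ Set.InjOn Φ V ∧
      (∀ x ∈ (LinearMap.ker (fderiv ℝ g 0 : X →ₗ[ℝ] Y) : Submodule ℝ X).carrier ∩ V, Φ x ∈ N) ∧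
      (∀ x ∈ (Δ : Set X) ∩ V, Φ x ∈ (Δ : Set X)) :=
  stmt_17_general N g U hU h0U hg hg0 hsurj hNU Δ htrans
end
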